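/- arXiv:1911.01714 — 4 statements merged into one kernel-verified Lean document; each statement's English description precedes it below -/
import Mathlib

section
/- Let μ be a valuation on K[x] extending v and φ ∈ K[x] a non-constant monic polynomial. Then φ is μ-minimal (i.e. in_μ(φ) does not divide in_μ(f) in the graded algebra of μ for any nonzero f with deg f < deg φ) if and only if for every f ∈ K[x] with φ-expansion f = Σ_s a_s φ^s (deg a_s < deg φ), one has μ(f) = min_s μ(a_s φ^s). -/
open Polynomial Finset

variable {K : Type*} [Field K] {Λ : Type*} [AddCommGroup Λ] [LinearOrder Λ] [IsOrderedAddMonoid Λ]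

/-- `v` is a valuation on the field `K` with values in `Λ∞ = WithTop Λ`. -/
def IsVal (v : K → WithTop Λ) : Prop :=
  (∀ a, v a = ⊤ ↔ a = 0) ∧ v 1 = 0 ∧ (∀ a b, v (a * b) = v a + v b) ∧
    (∀ a b, min (v a) (v b) ≤ v (a + b))

/-- `μ` is a valuation on `K[x]` extending `v`. -/
def ExtVal (v : K → WithTop Λ) (μ : Polynomial K → WithTop Λ) : Prop :=
  (∀ f g, μ (f * g) = μ f + μ g) ∧ (∀ f g, min (μ f) (μ g) ≤ μ (f + g)) ∧
    (∀ a, μ (Polynomial.C a) = v a)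

/-- `h` divides `g` μ-equivalently (`h ∣_μ g`): there is `q` with `μ(g - q h) > μ(g)`. -/
def MuDvd (μ : Polynomial K → WithTop Λ) (h g : Polynomial K) : Prop :=
  ∃ q : Polynomial K, μ g < μ (g - q * h)

/-- `φ` is μ-minimal: `φ ∤_μ f` for every nonzero `f` of degree less than `deg φ`. -/
def MuMinimal (μ : Polynomial K → WithTop Λ) (φ : Polynomial K) : Prop :=
  ∀ f : Polynomial K, f ≠ 0 → f.degree < φ.degree → ¬ MuDvd μ φ f

/-- `φ` is μ-irreducible: the principal ideal generated by `in_μ φ` in the graded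
algebra is a nonzero prime ideal (stated via μ-divisibility). -/
def MuIrreducible (μ : Polynomial K → WithTop Λ) (φ : Polynomial K) : Prop :=
  μ φ ≠ ⊤ ∧ ¬ MuDvd μ φ 1 ∧
    ∀ f g : Polynomial K, MuDvd μ φ (f * g) → MuDvd μ φ f ∨ MuDvd μ φ g

/-- A (MacLane–Vaquié) key polynomial for `μ`. -/
def KeyPoly (μ : Polynomial K → WithTop Λ) (φ : Polynomial K) : Prop :=
  φ.Monic ∧ MuMinimal μ φ ∧ MuIrreducible μ φ

/-- `μ'` is the augmented valuation `[μ; φ, γ]`: on φ-expansions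
`f = Σ a_s φ^s` (with `deg a_s < deg φ`), `μ' f = min_s (μ(a_s) + s·γ)`. -/
def AugVal (μ : Polynomial K → WithTop Λ) (φ : Polynomial K) (γ : WithTop Λ)
    (μ' : Polynomial K → WithTop Λ) : Prop :=
  ∀ (f : Polynomial K) (n : ℕ) (a : ℕ → Polynomial K),
    (∀ s, (a s).degree < φ.degree) →
    f = ∑ s ∈ Finset.range n, a s * φ ^ s →
    μ' f = (Finset.range n).inf fun s => μ (a s) + s • γ

/-! By induction on the length of the φ-expansion, writing
`f = a₀ + φ · g`, it suffices that `μ (a + φ q) = min (μ a) (μ (φ q))` whenever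
`deg a < deg φ`. The ultrametric inequality is an equality unless both values agree, and
in that case a strict inequality `μ a < μ (a + φ q)` is precisely `φ ∣_μ a`, which
minimality forbids. Conversely, if `φ ∣_μ f` with `deg f < deg φ`, say `μ f < μ (f - q φ)`,
then expanding `q` gives a φ-expansion of `f - q φ` with constant term `f`, whose value
the expansion formula bounds by `μ f`. -/

theorem Finset.sum_range_succ_mul_pow {R : Type*} [CommSemiring R] (a : ℕ → R) (φ : R)
    (n : ℕ) :
    ∑ s ∈ range (n + 1), a s * φ ^ s = a 0 + φ * ∑ s ∈ range n, a (s + 1) * φ ^ s := by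
  rw [sum_range_succ', mul_sum, pow_zero, mul_one, add_comm]
  simp only [pow_succ, mul_left_comm φ, mul_comm φ]

theorem Polynomial.exists_sum_mul_pow_of_degree_pos {φ : K[X]} (hdeg : 0 < φ.degree)
    (f : K[X]) :
    ∃ (n : ℕ) (a : ℕ → K[X]), (∀ s, (a s).degree < φ.degree) ∧
      f = ∑ s ∈ range n, a s * φ ^ s := by
  induction f using degree_lt_wf.induction with
  | _ f ih =>
    by_cases hf : f = 0
    · exact ⟨0, 0, fun _ => degree_zero.trans_lt (bot_lt_of_lt hdeg), by simp [hf]⟩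
    obtain ⟨n, b, hb, hquot⟩ := ih (f / φ) (degree_div_lt hf hdeg)
    refine ⟨n + 1, fun | 0 => f % φ | s + 1 => b s, ?_, ?_⟩
    · rintro (_ | s)
      exacts [degree_mod_lt f (ne_zero_of_degree_gt hdeg), hb s]
    · rw [sum_range_succ_mul_pow, ← hquot]
      exact (EuclideanDomain.mod_add_div f φ).symm

theorem Finset.inf_range_succ' {α : Type*} [SemilatticeInf α] [OrderTop α] (g : ℕ → α)
    (n : ℕ) : (range (n + 1)).inf g = g 0 ⊓ (range n).inf fun s => g (s + 1) := by
  rw [range_add_one', inf_insert, inf_map]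
  rfl

theorem IsVal.map_neg_one {v : K → WithTop Λ} (hv : IsVal v) : v (-1) = 0 := by
  have h : v (-1) + v (-1) = 0 := by rw [← hv.2.2.1, neg_one_mul, neg_neg, hv.2.1]
  lift v (-1) to Λ using (by rintro htop; simp [htop] at h) with y
  norm_cast at h ⊢
  exact two_nsmul_eq_zero.mp ((two_nsmul y).trans h)

namespace ExtVal

variable {v : K → WithTop Λ} {μ : K[X] → WithTop Λ}

theorem map_zero (hv : IsVal v) (hμ : ExtVal v μ) : μ 0 = ⊤ := by
  rw [← C_0, hμ.2.2, (hv.1 0).2 rfl]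

theorem map_neg (hv : IsVal v) (hμ : ExtVal v μ) (f : K[X]) : μ (-f) = μ f := by
  rw [← neg_one_mul, ← C_1, ← C_neg, hμ.1, hμ.2.2, hv.map_neg_one, zero_add]

theorem map_add_eq_left (hv : IsVal v) (hμ : ExtVal v μ) {f g : K[X]} (h : μ f < μ g) :
    μ (f + g) = μ f := by
  refine le_antisymm ?_ ((min_eq_left h.le).ge.trans (hμ.2.1 f g))
  by_contra! hlt
  have := hμ.2.1 (f + g) (-g)
  rw [add_neg_cancel_right, map_neg hv hμ] at this
  exact (lt_min hlt h).not_ge this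

end ExtVal

section

variable {v : K → WithTop Λ} {μ : K[X] → WithTop Λ} {φ : K[X]}

theorem MuMinimal.map_add_mul (hv : IsVal v) (hμ : ExtVal v μ) (hmin : MuMinimal μ φ)
    {a : K[X]} (ha : a.degree < φ.degree) (q : K[X]) :
    μ (a + φ * q) = min (μ a) (μ (φ * q)) := by
  refine le_antisymm ?_ (hμ.2.1 _ _)
  rcases lt_or_ge (μ (φ * q)) (μ a) with hlt | hle
  · rw [add_comm, hμ.map_add_eq_left hv hlt]
    exact (min_eq_right hlt.le).ge
  rw [min_eq_left hle]
  by_cases ha0 : a = 0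
  · simp [ha0, hμ.map_zero hv]
  by_contra! hdvd
  exact hmin a ha0 ha ⟨-q, by rwa [neg_mul, sub_neg_eq_add, mul_comm]⟩

theorem MuMinimal.map_sum_mul_pow (hv : IsVal v) (hμ : ExtVal v μ) (hmin : MuMinimal μ φ)
    (n : ℕ) (a : ℕ → K[X]) (ha : ∀ s, (a s).degree < φ.degree) :
    μ (∑ s ∈ range n, a s * φ ^ s) = (range n).inf fun s => μ (a s * φ ^ s) := by
  induction n generalizing a with
  | zero => simp [hμ.map_zero hv]
  | succ n ih =>
    have hshift : μ φ + ((range n).inf fun s => μ (a (s + 1) * φ ^ s)) =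
        (range n).inf fun s => μ (a (s + 1) * φ ^ (s + 1)) := by
      rw [apply_inf_eq_inf_comp_of_linearOrder (μ φ + ·) (fun _ _ h => add_le_add_right h _)
        (add_top _)]
      refine inf_congr rfl fun s _ => ?_
      simp only [Function.comp_apply, ← hμ.1, pow_succ, mul_left_comm φ, mul_comm φ]
    rw [sum_range_succ_mul_pow, hmin.map_add_mul hv hμ (ha 0), hμ.1 φ,
      ih (fun s => a (s + 1)) (fun s => ha _), hshift, inf_range_succ', pow_zero, mul_one]

end

theorem muMinimal_iff_phi_expansion_general (v : K → WithTop Λ) (μ : Polynomial K → WithTop Λ)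
    (hv : IsVal v) (hμ : ExtVal v μ) (φ : Polynomial K)
    (hdeg : 0 < φ.degree) :
    MuMinimal μ φ ↔
      ∀ (f : Polynomial K) (n : ℕ) (a : ℕ → Polynomial K),
        (∀ s, (a s).degree < φ.degree) →
        f = ∑ s ∈ Finset.range n, a s * φ ^ s →
        μ f = (Finset.range n).inf fun s => μ (a s * φ ^ s) := by
  refine ⟨fun hmin f n a ha hf => hf ▸ hmin.map_sum_mul_pow hv hμ n a ha, ?_⟩
  rintro hexp f hf0 hfd ⟨q, hdvd⟩
  obtain ⟨n, b, hb, hq⟩ := exists_sum_mul_pow_of_degree_pos hdeg (-q)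
  have hexpansion :
      f - q * φ = ∑ s ∈ range (n + 1), (fun | 0 => f | s + 1 => b s) s * φ ^ s := by
    rw [sum_range_succ_mul_pow, ← hq]
    ring
  rw [hexp _ (n + 1) _ (by rintro (_ | s); exacts [hfd, hb s]) hexpansion] at hdvd
  refine hdvd.not_ge ((inf_le (mem_range.mpr n.succ_pos)).trans ?_)
  simp

/-- a monic non-constant `φ` is μ-minimal iff for every `f` and every
φ-expansion `f = Σ_{s<n} a_s φ^s` (`deg a_s < deg φ`) one has
`μ f = min_s μ(a_s φ^s)`. -/
theorem muMinimal_iff_phi_expansion (v : K → WithTop Λ) (μ : Polynomial K → WithTop Λ)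
    (hv : IsVal v) (hμ : ExtVal v μ) (φ : Polynomial K)
    (hmonic : φ.Monic) (hdeg : 0 < φ.degree) :
    MuMinimal μ φ ↔
      ∀ (f : Polynomial K) (n : ℕ) (a : ℕ → Polynomial K),
        (∀ s, (a s).degree < φ.degree) →
        f = ∑ s ∈ Finset.range n, a s * φ ^ s →
        μ f = (Finset.range n).inf fun s => μ (a s * φ ^ s) :=
  muMinimal_iff_phi_expansion_general v μ hv hμ φ hdeg
end

section
/- Let μ be a valuation on K[x] extending v, φ a key polynomial for μ, and γ ∈ Λ∞ with μ(φ) < γ. Define μ' on K[x] by μ'(f) = min_s { μ(a_s) + sγ } where f = Σ_s a_s φ^s is the φ-expansion of f. Then μ' is a valuation on K[x]: μ'(fg) = μ'(f) + μ'(g) and μ'(f+g) ≥ min{μ'(f), μ'(g)} for all f,g ∈ K[x]. -/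
open Polynomial Finset

variable {K : Type*} [Field K] {Λ : Type*} [AddCommGroup Λ] [LinearOrder Λ] [IsOrderedAddMonoid Λ]

/-!
Encode φ-expansions `f = Σ a_s φ^s` and `g = Σ b_t φ^t` as polynomials `P = Σ a_s X^s` and
`Q = Σ b_t X^t` over `K[x]`. The coefficients `c_u` of `P * Q` have degree `< 2 deg φ`, and
dividing each one, `c_u = r_u + q_u φ`, and carrying `q_u` one place up gives the φ-expansion of
`fg`, with coefficients `r_u + q_{u-1}`. By μ-minimality of `φ`, `μ(r_u) ≥ μ(c_u)` and
`μ(q_{u-1}) + μ(φ) ≥ μ(c_{u-1})`; since `γ > μ(φ)` this gives `μ'(fg) ≥ μ'(f) + μ'(g)`.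
For the converse, let `s₀, t₀` be the first indices where the minima defining `μ'(f)`, `μ'(g)`
are attained. Then `a_{s₀} b_{t₀}` strictly dominates the other terms of `c_{s₀+t₀}`, and by
μ-irreducibility `φ` does not μ-divide it, so the remainder `r_{s₀+t₀}` keeps the value
`μ(a_{s₀} b_{t₀})` while the carried term `q_{s₀+t₀-1}` is strictly larger.
-/

namespace AddValuation

variable {R Γ₀ : Type*} [Ring R] [LinearOrderedAddCommMonoidWithTop Γ₀] (v : AddValuation R Γ₀)

theorem le_map_add_add {x y : R} {α w : Γ₀} (hx : α ≤ v x + w) (hy : α ≤ v y + w) :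
    α ≤ v (x + y) + w :=
  (le_min hx hy).trans ((min_add_add_right _ _ _).trans_le (add_le_add_left (v.map_add x y) w))

theorem exists_map_le_map_sum {ι : Type*} {s : Finset ι} (hs : s.Nonempty) (f : ι → R) :
    ∃ i ∈ s, v (f i) ≤ v (∑ i ∈ s, f i) := by
  obtain ⟨i, hi, hinf⟩ := s.exists_mem_eq_inf hs (v ∘ f)
  refine ⟨i, hi, v.map_le_sum fun j hj => ?_⟩
  exact (hinf.symm.trans_le (Finset.inf_le hj) : v (f i) ≤ v (f j))

theorem le_map_sum_add {ι : Type*} {s : Finset ι} {f : ι → R} {α w : Γ₀}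
    (h : ∀ i ∈ s, α ≤ v (f i) + w) : α ≤ v (∑ i ∈ s, f i) + w := by
  rcases s.eq_empty_or_nonempty with rfl | hs
  · simp
  obtain ⟨i, hi, hle⟩ := v.exists_map_le_map_sum hs f
  exact (h i hi).trans (by gcongr)

theorem lt_map_sum_add {ι : Type*} {s : Finset ι} {f : ι → R} {α w : Γ₀} (hα : α ≠ ⊤)
    (h : ∀ i ∈ s, α < v (f i) + w) : α < v (∑ i ∈ s, f i) + w := by
  rcases s.eq_empty_or_nonempty with rfl | hs
  · simpa using hα.lt_top
  obtain ⟨i, hi, hle⟩ := v.exists_map_le_map_sum hs f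
  exact (h i hi).trans_le (by gcongr)

end AddValuation

section KeyPolynomial

variable {μ : AddValuation K[X] (WithTop Λ)} {φ : K[X]}

theorem KeyPoly.degree_pos (hφ : KeyPoly μ φ) : 0 < φ.degree := by
  by_contra h
  obtain rfl : φ = 1 := hφ.1.degree_le_zero_iff_eq_one.1 (not_lt.1 h)
  exact hφ.2.2.2.1 ⟨1, by simp⟩

theorem MuMinimal.map_le_map_mul_divByMonic (hmin : MuMinimal μ φ) (hφ : φ.Monic) (c : K[X]) :
    μ c ≤ μ (φ * (c /ₘ φ)) := by
  by_contra! hlt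
  have hrem : c %ₘ φ = c - φ * (c /ₘ φ) := eq_sub_of_add_eq (modByMonic_add_div c φ)
  have hμrem : μ (c %ₘ φ) = μ (φ * (c /ₘ φ)) := by
    rw [hrem, μ.map_sub_eq_of_lt_right hlt]
  refine hmin (c %ₘ φ) (fun h0 => ?_) (degree_modByMonic_lt c hφ) ⟨-(c /ₘ φ), ?_⟩
  · rw [h0, μ.map_zero] at hμrem
    exact (hμrem ▸ hlt).ne_top rfl
  · rwa [hμrem, show c %ₘ φ - -(c /ₘ φ) * φ = c by rw [hrem]; ring]

theorem MuMinimal.map_le_map_modByMonic (hmin : MuMinimal μ φ) (hφ : φ.Monic) (c : K[X]) :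
    μ c ≤ μ (c %ₘ φ) := by
  rw [eq_sub_of_add_eq (modByMonic_add_div c φ)]
  exact μ.map_le_sub le_rfl (hmin.map_le_map_mul_divByMonic hφ c)

theorem MuMinimal.map_modByMonic_of_not_muDvd (hmin : MuMinimal μ φ) (hφ : φ.Monic) {c : K[X]}
    (hc : ¬ MuDvd μ φ c) : μ (c %ₘ φ) = μ c := by
  refine le_antisymm (not_lt.1 fun hlt => hc ⟨c /ₘ φ, ?_⟩) (hmin.map_le_map_modByMonic hφ c)
  rwa [mul_comm, ← eq_sub_of_add_eq (modByMonic_add_div c φ)]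

theorem KeyPoly.not_muDvd_mul (hφ : KeyPoly μ φ) {a b : K[X]} (ha : a ≠ 0) (hb : b ≠ 0)
    (hda : a.degree < φ.degree) (hdb : b.degree < φ.degree) : ¬ MuDvd μ φ (a * b) := fun h =>
  (hφ.2.2.2.2 a b h).elim (hφ.2.1 a ha hda) (hφ.2.1 b hb hdb)

theorem MuDvd.of_map_lt_map_sub {x y : K[X]} (h : μ x < μ (y - x)) (hy : MuDvd μ φ y) :
    MuDvd μ φ x := by
  obtain ⟨q, hq⟩ := hy
  refine ⟨q, lt_of_lt_of_le (lt_min (μ.map_eq_of_lt_sub h ▸ hq) h) ?_⟩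
  rw [show x - q * φ = (y - q * φ) - (y - x) by ring]
  exact μ.map_sub _ _

theorem KeyPoly.map_modByMonic_eq (hφ : KeyPoly μ φ) {a b c : K[X]} (hda : a.degree < φ.degree)
    (hdb : b.degree < φ.degree) (h : μ (a * b) < μ (c - a * b)) : μ (c %ₘ φ) = μ (a * b) := by
  have hab : a * b ≠ 0 := fun h0 => by simp [h0] at h
  have hc : ¬ MuDvd μ φ c := fun hc =>
    hφ.not_muDvd_mul (left_ne_zero_of_mul hab) (right_ne_zero_of_mul hab) hda hdb
      (hc.of_map_lt_map_sub h)
  rw [hφ.2.1.map_modByMonic_of_not_muDvd hφ.1 hc, μ.map_eq_of_lt_sub h]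

end KeyPolynomial

section Expansion

variable {φ : K[X]}

/-- `P = Σ a_s X^s` encodes the φ-expansion `Σ a_s φ^s` of `P.eval φ`. -/
def CoeffsDegreeLT (φ : K[X]) (P : K[X][X]) : Prop :=
  ∀ s, (P.coeff s).degree < φ.degree

theorem CoeffsDegreeLT.add {P Q : K[X][X]} (hP : CoeffsDegreeLT φ P) (hQ : CoeffsDegreeLT φ Q) :
    CoeffsDegreeLT φ (P + Q) := fun s =>
  (degree_add_le _ _).trans_lt (max_lt (hP s) (hQ s))

theorem exists_coeffsDegreeLT_eval_eq (hφ : φ.Monic) (hdeg : 0 < φ.degree) (f : K[X]) :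
    ∃ P : K[X][X], CoeffsDegreeLT φ P ∧ P.eval φ = f := by
  induction h : f.natDegree using Nat.strong_induction_on generalizing f with
  | _ n ih =>
  by_cases hf : f.degree < φ.degree
  · refine ⟨C f, fun s => ?_, eval_C⟩
    cases s with
    | zero => rwa [coeff_C_zero]
    | succ s =>
      rw [coeff_C_succ, degree_zero]
      exact (WithBot.bot_lt_coe 0).trans hdeg
  · have hφf : φ.natDegree ≤ f.natDegree := natDegree_le_natDegree (not_lt.1 hf)
    have hφpos : 0 < φ.natDegree := natDegree_pos_iff_degree_pos.2 hdeg
    obtain ⟨Q, hQ, hQf⟩ := ih _ (by rw [natDegree_divByMonic f hφ]; omega) (f /ₘ φ) rfl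
    refine ⟨C (f %ₘ φ) + X * Q, fun s => ?_, ?_⟩
    · cases s with
      | zero => simpa using degree_modByMonic_lt f hφ
      | succ s => simpa [coeff_C_succ] using hQ s
    · rw [eval_add, eval_C, eval_mul, eval_X, hQf, modByMonic_add_div]

/-- When the coefficients of `C` have degree `< 2 deg φ`, this is the φ-expansion of `C.eval φ`. -/
noncomputable def carry (φ : K[X]) (C : K[X][X]) : K[X][X] :=
  C.sum fun u c => monomial u (c %ₘ φ) + monomial (u + 1) (c /ₘ φ)

theorem coeff_carry_zero (C : K[X][X]) : (carry φ C).coeff 0 = C.coeff 0 %ₘ φ := by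
  simp only [carry, sum_def, finsetSum_coeff, coeff_add, coeff_monomial, Nat.succ_ne_zero,
    if_false, add_zero, Finset.sum_ite_eq', mem_support_iff]
  split_ifs with h <;> simp_all

theorem coeff_carry_succ (C : K[X][X]) (n : ℕ) :
    (carry φ C).coeff (n + 1) = C.coeff (n + 1) %ₘ φ + C.coeff n /ₘ φ := by
  simp only [carry, sum_def, finsetSum_coeff, coeff_add, coeff_monomial, Finset.sum_add_distrib,
    add_left_inj, Finset.sum_ite_eq', mem_support_iff]
  split_ifs <;> simp_all

theorem eval_carry (C : K[X][X]) : (carry φ C).eval φ = C.eval φ := by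
  rw [carry, sum_def, eval_finsetSum, eval_eq_sum, sum_def]
  refine Finset.sum_congr rfl fun u _ => ?_
  rw [eval_add, eval_monomial, eval_monomial]
  linear_combination φ ^ u * modByMonic_add_div (C.coeff u) φ

theorem degree_divByMonic_lt_of_lt_add (hφ : φ.Monic) {c : K[X]}
    (hc : c.degree < φ.degree + φ.degree) : (c /ₘ φ).degree < φ.degree := by
  by_cases hlt : c.degree < φ.degree
  · rw [(divByMonic_eq_zero_iff hφ).2 hlt, degree_zero]
    exact bot_lt_iff_ne_bot.2 (degree_ne_bot.2 hφ.ne_zero)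
  · rw [← degree_add_divByMonic hφ (not_lt.1 hlt)] at hc
    exact lt_of_add_lt_add_left hc

theorem coeffsDegreeLT_carry (hφ : φ.Monic) {C : K[X][X]}
    (hC : ∀ u, (C.coeff u).degree < φ.degree + φ.degree) : CoeffsDegreeLT φ (carry φ C) := by
  intro u
  cases u with
  | zero => exact coeff_carry_zero (φ := φ) C ▸ degree_modByMonic_lt _ hφ
  | succ n =>
    rw [coeff_carry_succ]
    exact (degree_add_le _ _).trans_lt
      (max_lt (degree_modByMonic_lt _ hφ) (degree_divByMonic_lt_of_lt_add hφ (hC n)))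

theorem CoeffsDegreeLT.degree_coeff_mul_lt {P Q : K[X][X]} (hP : CoeffsDegreeLT φ P)
    (hQ : CoeffsDegreeLT φ Q) (u : ℕ) : ((P * Q).coeff u).degree < φ.degree + φ.degree := by
  have hφ : φ.degree ≠ ⊥ := (hP 0).ne_bot
  rw [coeff_mul]
  refine (degree_sum_le _ _).trans_lt ((Finset.sup_lt_iff ?_).2 fun p _ => ?_)
  · exact bot_lt_iff_ne_bot.2 (by simp [hφ])
  · exact (degree_mul_le _ _).trans_lt
      ((add_le_add le_rfl (hQ p.2).le).trans_lt (WithBot.add_lt_add_right hφ (hP p.1)))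

end Expansion

section CarryValuation

variable {μ : AddValuation K[X] (WithTop Λ)} {φ : K[X]} {γ : WithTop Λ} {α w : WithTop Λ}

theorem MuMinimal.le_map_divByMonic_add (hmin : MuMinimal μ φ) (hφ : φ.Monic) (hγ : μ φ ≤ γ)
    {c : K[X]} (h : α ≤ μ c + w) : α ≤ μ (c /ₘ φ) + (γ + w) := calc
  α ≤ μ c + w := h
  _ ≤ μ φ + μ (c /ₘ φ) + w := by
    gcongr
    exact μ.map_mul φ _ ▸ hmin.map_le_map_mul_divByMonic hφ c
  _ ≤ γ + μ (c /ₘ φ) + w := by gcongr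
  _ = μ (c /ₘ φ) + (γ + w) := by rw [add_comm γ, add_assoc]

theorem MuMinimal.lt_map_divByMonic_add (hmin : MuMinimal μ φ) (hφ : φ.Monic) (hγ : μ φ < γ)
    (hα : α ≠ ⊤) {c : K[X]} (h : α ≤ μ c + w) : α < μ (c /ₘ φ) + (γ + w) := by
  rw [add_left_comm]
  by_cases hfin : μ (c /ₘ φ) + w = ⊤
  · rw [hfin, add_top]
    exact hα.lt_top
  calc α ≤ μ c + w := h
    _ ≤ μ φ + (μ (c /ₘ φ) + w) := by
      rw [← add_assoc]
      gcongr
      exact μ.map_mul φ _ ▸ hmin.map_le_map_mul_divByMonic hφ c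
    _ < γ + (μ (c /ₘ φ) + w) := WithTop.add_lt_add_right hfin hγ

theorem MuMinimal.le_map_coeff_carry (hmin : MuMinimal μ φ) (hφ : φ.Monic) (hγ : μ φ ≤ γ)
    {C : K[X][X]} (hC : ∀ u, α ≤ μ (C.coeff u) + u • γ) (u : ℕ) :
    α ≤ μ ((carry φ C).coeff u) + u • γ := by
  have hrem (u : ℕ) : α ≤ μ (C.coeff u %ₘ φ) + u • γ :=
    (hC u).trans (by gcongr; exact hmin.map_le_map_modByMonic hφ _)
  cases u with
  | zero => exact coeff_carry_zero (φ := φ) C ▸ hrem 0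
  | succ n =>
    rw [coeff_carry_succ]
    exact μ.le_map_add_add (hrem _) (succ_nsmul' γ n ▸ hmin.le_map_divByMonic_add hφ hγ (hC n))

theorem MuMinimal.map_coeff_carry_eq (hmin : MuMinimal μ φ) (hφ : φ.Monic) (hγ : μ φ < γ)
    (hα : α ≠ ⊤) {C : K[X][X]} (hC : ∀ u, α ≤ μ (C.coeff u) + u • γ) {u : ℕ}
    (hu : μ (C.coeff u %ₘ φ) + u • γ = α) : μ ((carry φ C).coeff u) + u • γ = α := by
  cases u with
  | zero => rwa [coeff_carry_zero]
  | succ n =>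
    have hw : (n + 1) • γ ≠ ⊤ := fun h => hα (by rw [← hu, h, add_top])
    have hlt : μ (C.coeff (n + 1) %ₘ φ) < μ (C.coeff n /ₘ φ) := by
      rw [← WithTop.add_lt_add_iff_right hw, hu, succ_nsmul']
      exact hmin.lt_map_divByMonic_add hφ hγ hα (hC n)
    rw [coeff_carry_succ, μ.map_add_eq_of_lt_left hlt, hu]

end CarryValuation

namespace AugVal

variable {μ : AddValuation K[X] (WithTop Λ)} {φ : K[X]} {γ : WithTop Λ} {μ' : K[X] → WithTop Λ}
  {P Q : K[X][X]}

theorem eq_inf (haug : AugVal μ φ γ μ') (hP : CoeffsDegreeLT φ P) {n : ℕ} (hn : P.natDegree < n) :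
    μ' (P.eval φ) = (Finset.range n).inf fun s => μ (P.coeff s) + s • γ :=
  haug _ n P.coeff hP (eval_eq_sum_range' hn φ)

theorem le_coeff (haug : AugVal μ φ γ μ') (hP : CoeffsDegreeLT φ P) (s : ℕ) :
    μ' (P.eval φ) ≤ μ (P.coeff s) + s • γ := by
  rw [haug.eq_inf hP (n := max P.natDegree s + 1) (by omega)]
  exact Finset.inf_le (Finset.mem_range.2 (by omega))

theorem le_of_forall_le (haug : AugVal μ φ γ μ') (hP : CoeffsDegreeLT φ P) {α : WithTop Λ}
    (h : ∀ s, α ≤ μ (P.coeff s) + s • γ) : α ≤ μ' (P.eval φ) := by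
  rw [haug.eq_inf hP (lt_add_one _)]
  exact Finset.le_inf fun s _ => h s

theorem exists_first_min (haug : AugVal μ φ γ μ') (hP : CoeffsDegreeLT φ P) :
    ∃ s₀, μ (P.coeff s₀) + s₀ • γ = μ' (P.eval φ) ∧
      ∀ s < s₀, μ' (P.eval φ) < μ (P.coeff s) + s • γ := by
  classical
  have hex : ∃ s, μ (P.coeff s) + s • γ = μ' (P.eval φ) := by
    obtain ⟨s, -, hs⟩ := (Finset.range (P.natDegree + 1)).exists_mem_eq_inf
      Finset.nonempty_range_add_one fun s => μ (P.coeff s) + s • γ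
    exact ⟨s, by rw [haug.eq_inf hP (lt_add_one _), hs]⟩
  exact ⟨Nat.find hex, Nat.find_spec hex, fun s hs =>
    (haug.le_coeff hP s).lt_of_ne fun h => Nat.find_min hex hs h.symm⟩

theorem min_le_map_add (haug : AugVal μ φ γ μ') (hP : CoeffsDegreeLT φ P)
    (hQ : CoeffsDegreeLT φ Q) : min (μ' (P.eval φ)) (μ' (Q.eval φ)) ≤ μ' ((P + Q).eval φ) :=
  haug.le_of_forall_le (hP.add hQ) fun s => coeff_add P Q s ▸
    μ.le_map_add_add ((min_le_left _ _).trans (haug.le_coeff hP s))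
      ((min_le_right _ _).trans (haug.le_coeff hQ s))

theorem add_le_map_mul_coeff (haug : AugVal μ φ γ μ') (hP : CoeffsDegreeLT φ P)
    (hQ : CoeffsDegreeLT φ Q) (i j : ℕ) :
    μ' (P.eval φ) + μ' (Q.eval φ) ≤ μ (P.coeff i * Q.coeff j) + (i + j) • γ := by
  rw [μ.map_mul, add_nsmul, add_add_add_comm]
  exact add_le_add (haug.le_coeff hP i) (haug.le_coeff hQ j)

theorem add_lt_map_mul_coeff (haug : AugVal μ φ γ μ') (hP : CoeffsDegreeLT φ P)
    (hQ : CoeffsDegreeLT φ Q) (hα : μ' (P.eval φ) + μ' (Q.eval φ) ≠ ⊤) {i j : ℕ}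
    (h : μ' (P.eval φ) < μ (P.coeff i) + i • γ ∨ μ' (Q.eval φ) < μ (Q.coeff j) + j • γ) :
    μ' (P.eval φ) + μ' (Q.eval φ) < μ (P.coeff i * Q.coeff j) + (i + j) • γ := by
  rw [μ.map_mul, add_nsmul, add_add_add_comm]
  obtain ⟨hPt, hQt⟩ := WithTop.add_ne_top.1 hα
  rcases h with h | h
  · exact WithTop.add_lt_add_of_lt_of_le hQt h (haug.le_coeff hQ j)
  · rw [add_comm (μ' _), add_comm (μ (P.coeff i) + _)]
    exact WithTop.add_lt_add_of_lt_of_le hPt h (haug.le_coeff hP i)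

theorem le_map_coeff_mul (haug : AugVal μ φ γ μ') (hP : CoeffsDegreeLT φ P)
    (hQ : CoeffsDegreeLT φ Q) (u : ℕ) :
    μ' (P.eval φ) + μ' (Q.eval φ) ≤ μ ((P * Q).coeff u) + u • γ := by
  rw [coeff_mul]
  refine μ.le_map_sum_add fun p hp => ?_
  rw [← mem_antidiagonal.1 hp]
  exact haug.add_le_map_mul_coeff hP hQ p.1 p.2

theorem lt_map_coeff_mul_sub (haug : AugVal μ φ γ μ') (hP : CoeffsDegreeLT φ P)
    (hQ : CoeffsDegreeLT φ Q) (hα : μ' (P.eval φ) + μ' (Q.eval φ) ≠ ⊤) {s₀ t₀ : ℕ}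
    (hs₀ : ∀ s < s₀, μ' (P.eval φ) < μ (P.coeff s) + s • γ)
    (ht₀ : ∀ t < t₀, μ' (Q.eval φ) < μ (Q.coeff t) + t • γ) :
    μ' (P.eval φ) + μ' (Q.eval φ) <
      μ ((P * Q).coeff (s₀ + t₀) - P.coeff s₀ * Q.coeff t₀) + (s₀ + t₀) • γ := by
  have hmem : (s₀, t₀) ∈ antidiagonal (s₀ + t₀) := mem_antidiagonal.2 rfl
  rw [coeff_mul, ← Finset.sum_erase_add _ _ hmem, add_sub_cancel_right]
  refine μ.lt_map_sum_add hα fun p hp => ?_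
  have hp_sum := mem_antidiagonal.1 (Finset.mem_of_mem_erase hp)
  have hp_ne := Finset.ne_of_mem_erase hp
  rw [← hp_sum]
  refine haug.add_lt_map_mul_coeff hP hQ hα ?_
  by_cases h : p.1 < s₀
  · exact Or.inl (hs₀ _ h)
  · exact Or.inr (ht₀ _ (by contrapose! hp_ne; exact Prod.ext (by omega) (by omega)))

theorem add_le_map_mul (haug : AugVal μ φ γ μ') (hφ : φ.Monic) (hmin : MuMinimal μ φ)
    (hγ : μ φ ≤ γ) (hP : CoeffsDegreeLT φ P) (hQ : CoeffsDegreeLT φ Q) :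
    μ' (P.eval φ) + μ' (Q.eval φ) ≤ μ' ((P * Q).eval φ) := by
  rw [← eval_carry (φ := φ) (P * Q)]
  exact haug.le_of_forall_le (coeffsDegreeLT_carry hφ (hP.degree_coeff_mul_lt hQ))
    (hmin.le_map_coeff_carry hφ hγ (haug.le_map_coeff_mul hP hQ))

theorem map_mul_le (haug : AugVal μ φ γ μ') (hφ : KeyPoly μ φ) (hγ : μ φ < γ)
    (hP : CoeffsDegreeLT φ P) (hQ : CoeffsDegreeLT φ Q) :
    μ' ((P * Q).eval φ) ≤ μ' (P.eval φ) + μ' (Q.eval φ) := by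
  set α := μ' (P.eval φ) + μ' (Q.eval φ)
  rcases eq_or_ne α ⊤ with hα | hα
  · exact hα ▸ le_top
  obtain ⟨s₀, hs₀, hs₀_first⟩ := haug.exists_first_min hP
  obtain ⟨t₀, ht₀, ht₀_first⟩ := haug.exists_first_min hQ
  have hlead : μ (P.coeff s₀ * Q.coeff t₀) + (s₀ + t₀) • γ = α := by
    rw [μ.map_mul, add_nsmul, add_add_add_comm, hs₀, ht₀]
  have hw : (s₀ + t₀) • γ ≠ ⊤ := fun h => hα (by rw [← hlead, h, add_top])
  have hdom : μ (P.coeff s₀ * Q.coeff t₀) <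
      μ ((P * Q).coeff (s₀ + t₀) - P.coeff s₀ * Q.coeff t₀) := by
    rw [← WithTop.add_lt_add_iff_right hw, hlead]
    exact haug.lt_map_coeff_mul_sub hP hQ hα hs₀_first ht₀_first
  have hrem := hφ.map_modByMonic_eq (hP s₀) (hQ t₀) hdom
  rw [← eval_carry (φ := φ) (P * Q)]
  have hcarry := coeffsDegreeLT_carry hφ.1 (hP.degree_coeff_mul_lt hQ)
  refine (haug.le_coeff hcarry (s₀ + t₀)).trans_eq ?_
  exact hφ.2.1.map_coeff_carry_eq hφ.1 hγ hα (haug.le_map_coeff_mul hP hQ) (by rw [hrem, hlead])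

end AugVal

/-- the augmented mapping `μ' = [μ; φ, γ]` is a valuation on `K[x]`. -/
theorem augmentation_is_valuation (v : K → WithTop Λ) (μ : Polynomial K → WithTop Λ)
    (hv : IsVal v) (hμ : ExtVal v μ)
    (φ : Polynomial K) (hφ : KeyPoly μ φ)
    (γ : WithTop Λ) (hγ : μ φ < γ)
    (μ' : Polynomial K → WithTop Λ) (haug : AugVal μ φ γ μ') :
    (∀ f g : Polynomial K, μ' (f * g) = μ' f + μ' g) ∧
      (∀ f g : Polynomial K, min (μ' f) (μ' g) ≤ μ' (f + g)) := by
  obtain ⟨μ, rfl⟩ : ∃ ν : AddValuation K[X] (WithTop Λ), ⇑ν = μ :=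
    ⟨.of μ (by rw [← C_0, hμ.2.2, (hv.1 0).2 rfl]) (by rw [← C_1, hμ.2.2, hv.2.1]) hμ.2.1 hμ.1,
      rfl⟩
  have hexp := exists_coeffsDegreeLT_eval_eq hφ.1 hφ.degree_pos
  refine ⟨fun f g => ?_, fun f g => ?_⟩ <;>
    obtain ⟨P, hP, rfl⟩ := hexp f <;> obtain ⟨Q, hQ, rfl⟩ := hexp g
  · rw [← eval_mul]
    exact le_antisymm (haug.map_mul_le hφ hγ hP hQ) (haug.add_le_map_mul hφ.1 hφ.2.1 hγ.le hP hQ)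
  · rw [← eval_add]
    exact haug.min_le_map_add hP hQ
end

section
/- Let μ : K[x] → Λ∞ be a valuation extending v on K. Then the set of Λ∞-valued valuations ρ on K[x] extending v with ρ < μ (i.e. ρ(f) ≤ μ(f) for all f and ρ ≠ μ) is totally ordered by the pointwise order. -/
open Polynomial Finset

variable {K : Type*} [Field K] {Λ : Type*} [AddCommGroup Λ] [LinearOrder Λ] [IsOrderedAddMonoid Λ]

/-!
Let `ρ < μ` and let `φ` be a polynomial of least degree with `ρ φ < μ φ`. If `ρ'` also agrees
with `μ` below `deg φ`, then `ρ` and `ρ'` compare as their values on `φ` do: writing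
`g = r + φ q` with `deg r < deg φ`, one has `ρ g = min (μ r) (ρ φ + ρ q)`, since a cancellation
of the two terms under `ρ` would force `μ r > μ r`, whereas `ρ' g ≥ min (μ r) (ρ' φ + ρ' q)`;
induction on the degree concludes. Of two valuations below `μ`, the other one agrees with `μ`
below the smaller of the two minimal degrees, so this comparison applies.
-/

namespace AddValuation

section Ring

variable {R Γ₀ : Type*} [Ring R] [LinearOrderedAddCommMonoidWithTop Γ₀]
  {ρ μ : AddValuation R Γ₀} {a b : R}

theorem map_add_eq_min_of_eq_of_lt (hle : ∀ f, ρ f ≤ μ f) (ha : ρ a = μ a) (hb : ρ b < μ b) :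
    ρ (a + b) = min (ρ a) (ρ b) := by
  rcases ne_or_eq (ρ a) (ρ b) with hab | hab
  · exact ρ.map_add_of_distinct_val hab
  refine le_antisymm ?_ (ρ.map_add _ _)
  by_contra! hlt
  rw [← hab, min_self] at hlt
  have : μ a < μ a := calc
    μ a = ρ a := ha.symm
    _ < min (μ (a + b)) (μ b) := lt_min (hlt.trans_le (hle _)) (hab ▸ hb)
    _ ≤ μ (a + b - b) := μ.map_sub _ _
    _ = μ a := by rw [add_sub_cancel_right]
  exact lt_irrefl _ this

end Ring

variable {ρ ρ' μ : AddValuation K[X] (WithTop Λ)} {φ : K[X]}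

theorem map_add_mul_eq_min (hle : ∀ f, ρ f ≤ μ f) {a : K[X]} (ha : ρ a = μ a)
    (hφ : ρ φ < μ φ) (q : K[X]) : ρ (a + φ * q) = min (ρ a) (ρ φ + ρ q) := by
  rw [← ρ.map_mul]
  rcases eq_or_ne (ρ q) ⊤ with hq | hq
  · have hφq : ρ (φ * q) = ⊤ := by rw [ρ.map_mul, hq, add_top]
    rw [hφq, min_top_right, ρ.map_add_supp a ((ρ.mem_supp_iff _).2 hφq)]
  · refine map_add_eq_min_of_eq_of_lt hle ha ?_
    rw [ρ.map_mul, μ.map_mul]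
    exact WithTop.add_lt_add_of_lt_of_le hq hφ (hle q)

theorem exists_minimal_lt (hC : ∀ c, ρ (C c) = μ (C c)) (hle : ∀ f, ρ f ≤ μ f) (hne : ρ ≠ μ) :
    ∃ φ : K[X], 0 < φ.degree ∧ ρ φ < μ φ ∧ ∀ g, g.degree < φ.degree → ρ g = μ g := by
  have hex : {f : K[X] | ρ f < μ f}.Nonempty := by
    obtain ⟨f, hf⟩ := DFunLike.ne_iff.1 hne
    exact ⟨f, (hle f).lt_of_ne hf⟩
  obtain ⟨φ, hφ : ρ φ < μ φ, hmin⟩ := degree_lt_wf.has_min _ hex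
  refine ⟨φ, ?_, hφ, fun g hg => (hle g).eq_or_lt.resolve_right fun h => hmin g h hg⟩
  by_contra! hdeg
  rw [eq_C_of_degree_le_zero hdeg, hC] at hφ
  exact lt_irrefl _ hφ

theorem le_of_eq_of_degree_lt (hρ : ∀ f, ρ f ≤ μ f)
    (hρφ : ∀ g, g.degree < φ.degree → ρ g = μ g) (hρ'φ : ∀ g, g.degree < φ.degree → ρ' g = μ g)
    (hφ0 : 0 < φ.degree) (hφ : ρ φ < μ φ) (hle : ρ φ ≤ ρ' φ) (g : K[X]) : ρ g ≤ ρ' g := by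
  induction g using degree_lt_wf.induction with | _ g ih => ?_
  rcases lt_or_ge g.degree φ.degree with hg | hg
  · rw [hρφ g hg, hρ'φ g hg]
  have hg0 : g ≠ 0 := ne_zero_of_degree_gt (hφ0.trans_le hg)
  have hmod : (g % φ).degree < φ.degree := degree_mod_lt g (ne_zero_of_degree_gt hφ0)
  have hdiv : ρ (g / φ) ≤ ρ' (g / φ) := ih _ (degree_div_lt hg0 hφ0)
  calc ρ g = ρ (g % φ + φ * (g / φ)) := by rw [EuclideanDomain.mod_add_div]
    _ = min (μ (g % φ)) (ρ φ + ρ (g / φ)) := by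
      rw [map_add_mul_eq_min hρ (hρφ _ hmod) hφ, hρφ _ hmod]
    _ ≤ min (ρ' (g % φ)) (ρ' (φ * (g / φ))) := by
      rw [hρ'φ _ hmod, ρ'.map_mul]
      gcongr
    _ ≤ ρ' g := (ρ'.map_add _ _).trans_eq (by rw [EuclideanDomain.mod_add_div])

theorem le_total_of_eq_of_degree_lt (hρ : ∀ f, ρ f ≤ μ f) (hρ' : ∀ f, ρ' f ≤ μ f)
    (hρφ : ∀ g, g.degree < φ.degree → ρ g = μ g) (hρ'φ : ∀ g, g.degree < φ.degree → ρ' g = μ g)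
    (hφ0 : 0 < φ.degree) (hφ : ρ φ < μ φ) :
    (∀ f, ρ f ≤ ρ' f) ∨ (∀ f, ρ' f ≤ ρ f) := by
  rcases le_total (ρ φ) (ρ' φ) with h | h
  · exact .inl (le_of_eq_of_degree_lt hρ hρφ hρ'φ hφ0 hφ h)
  · exact .inr (le_of_eq_of_degree_lt hρ' hρ'φ hρφ hφ0 (h.trans_lt hφ) h)

theorem le_total_of_lt (hρC : ∀ c, ρ (C c) = μ (C c)) (hρ'C : ∀ c, ρ' (C c) = μ (C c))
    (hρ : ∀ f, ρ f ≤ μ f) (hρ' : ∀ f, ρ' f ≤ μ f) (hρne : ρ ≠ μ) (hρ'ne : ρ' ≠ μ) :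
    (∀ f, ρ f ≤ ρ' f) ∨ (∀ f, ρ' f ≤ ρ f) := by
  obtain ⟨φ, hφ0, hφ, hρφ⟩ := exists_minimal_lt hρC hρ hρne
  obtain ⟨φ', hφ0', hφ', hρ'φ'⟩ := exists_minimal_lt hρ'C hρ' hρ'ne
  rcases le_total φ.degree φ'.degree with hdeg | hdeg
  · exact le_total_of_eq_of_degree_lt hρ hρ' hρφ (fun g hg => hρ'φ' g (hg.trans_le hdeg)) hφ0 hφ
  · exact (le_total_of_eq_of_degree_lt hρ' hρ hρ'φ' (fun g hg => hρφ g (hg.trans_le hdeg))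
      hφ0' hφ').symm

end AddValuation

noncomputable def ExtVal.toAddValuation {v : K → WithTop Λ} (hv : IsVal v) {ρ : K[X] → WithTop Λ}
    (hρ : ExtVal v ρ) : AddValuation K[X] (WithTop Λ) :=
  .of ρ (by rw [← C_0, hρ.2.2, (hv.1 0).2 rfl]) (by rw [← C_1, hρ.2.2, hv.2.1]) hρ.2.1 hρ.1

/-- the set of valuations on `K[x]` extending `v` which are strictly
smaller than `μ` is totally ordered by the pointwise order. -/
theorem lowerSet_totallyOrdered (v : K → WithTop Λ) (μ : Polynomial K → WithTop Λ)
    (hv : IsVal v) (hμ : ExtVal v μ) :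
    ∀ ρ ρ' : Polynomial K → WithTop Λ,
      ExtVal v ρ → (∀ f, ρ f ≤ μ f) → ρ ≠ μ →
      ExtVal v ρ' → (∀ f, ρ' f ≤ μ f) → ρ' ≠ μ →
      (∀ f, ρ f ≤ ρ' f) ∨ (∀ f, ρ' f ≤ ρ f) := by
  intro ρ ρ' hρ hρμ hρne hρ' hρ'μ hρ'ne
  have hC {σ : K[X] → WithTop Λ} (hσ : ExtVal v σ) (c : K) : σ (C c) = μ (C c) := by
    rw [hσ.2.2, hμ.2.2]
  exact AddValuation.le_total_of_lt (μ := hμ.toAddValuation hv)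
    (ρ := hρ.toAddValuation hv) (ρ' := hρ'.toAddValuation hv) (hC hρ) (hC hρ') hρμ hρ'μ
    (ne_of_apply_ne DFunLike.coe hρne) (ne_of_apply_ne DFunLike.coe hρ'ne)
end

section
/- For a ∈ K and γ ∈ Λ∞, define the depth-zero valuation ω_{a,γ} on K[x] by ω_{a,γ}(Σ_s a_s(x−a)^s) = min_s{v(a_s) + sγ}. Then for a,b ∈ K and γ,δ ∈ Λ∞: ω_{a,γ} ≤ ω_{b,δ} (pointwise) if and only if γ ≤ δ and v(a−b) ≥ γ. -/
open Polynomial Finset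

variable {K : Type*} [Field K] {Λ : Type*} [AddCommGroup Λ] [LinearOrder Λ] [IsOrderedAddMonoid Λ]

/-- `ω` is the depth-zero valuation `ω_{a,γ}`, acting on Taylor expansions at `a`
by `ω(Σ c_s (x−a)^s) = min_s (v(c_s) + s·γ)`. -/
def DepthZeroVal (v : K → WithTop Λ) (a : K) (γ : WithTop Λ)
    (ω : Polynomial K → WithTop Λ) : Prop :=
  ∀ (f : Polynomial K) (n : ℕ) (c : ℕ → K),
    f = ∑ s ∈ Finset.range n, Polynomial.C (c s) * (Polynomial.X - Polynomial.C a) ^ s →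
    ω f = (Finset.range n).inf fun s => v (c s) + s • γ

/-! `ω_{a,γ}` is the Gauss-type valuation `gaussVal v γ` read on the Taylor expansion at `a`, and
the Taylor expansion at `b` is the shift by `b - a` of the one at `a`.
Necessity: `ω_{a,γ}(x - a) = γ` while `ω_{b,δ}(x - a) = min(δ, v(a - b))`.
Sufficiency: the `s`-th coefficient of the shift of `g` by `c` is `Σ_n C(n+s, s) g_{n+s} c^n`; if
`γ ≤ v(c)` each term has value at least `v(g_{n+s}) + nγ`, and adding `sδ ≥ sγ` bounds this below
by `gaussVal v γ g`. -/

namespace IsVal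

variable {v : K → WithTop Λ}

lemma map_zero (hv : IsVal v) : v 0 = ⊤ := (hv.1 0).mpr rfl

lemma map_one (hv : IsVal v) : v 1 = 0 := hv.2.1

lemma map_mul (hv : IsVal v) (x y : K) : v (x * y) = v x + v y := hv.2.2.1 x y

lemma min_le_map_add (hv : IsVal v) (x y : K) : min (v x) (v y) ≤ v (x + y) := hv.2.2.2 x y

lemma map_neg_one_s12 (hv : IsVal v) : v (-1) = 0 := by
  have h : v (-1) + v (-1) = 0 := by rw [← hv.map_mul, neg_mul_neg, one_mul, hv.map_one]
  rcases le_total (v (-1)) 0 with hle | hge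
  · refine le_antisymm hle ?_
    calc (0 : WithTop Λ) = v (-1) + v (-1) := h.symm
      _ ≤ v (-1) + 0 := add_le_add_right hle _
      _ = v (-1) := add_zero _
  · refine le_antisymm ?_ hge
    calc v (-1) = v (-1) + 0 := (add_zero _).symm
      _ ≤ v (-1) + v (-1) := add_le_add_right hge _
      _ = 0 := h

lemma map_neg (hv : IsVal v) (x : K) : v (-x) = v x := by
  rw [neg_eq_neg_one_mul, hv.map_mul, hv.map_neg_one_s12, zero_add]

lemma map_pow (hv : IsVal v) (x : K) (n : ℕ) : v (x ^ n) = n • v x := by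
  induction n with
  | zero => simpa using hv.map_one
  | succ n ih => rw [pow_succ, hv.map_mul, ih, succ_nsmul]

lemma le_map_sum (hv : IsVal v) {ι : Type*} {s : Finset ι} {e : ι → K} {x y : WithTop Λ}
    (h : ∀ i ∈ s, x ≤ v (e i) + y) : x ≤ v (∑ i ∈ s, e i) + y := by
  induction s using Finset.cons_induction with
  | empty => simp [hv.map_zero]
  | cons i s _ ih =>
    rw [Finset.forall_mem_cons] at h
    rw [Finset.sum_cons]
    calc x ≤ min (v (e i)) (v (∑ j ∈ s, e j)) + y := by
          rw [← min_add_add_right]; exact le_min h.1 (ih h.2)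
      _ ≤ v (e i + ∑ j ∈ s, e j) + y := add_le_add_left (hv.min_le_map_add _ _) _

lemma natCast_nonneg (hv : IsVal v) (n : ℕ) : 0 ≤ v n := by
  induction n with
  | zero => simp [hv.map_zero]
  | succ n ih =>
    calc (0 : WithTop Λ) = min (v n) (v 1) := by rw [hv.map_one, min_eq_right ih]
      _ ≤ v (n + 1 : ℕ) := by push_cast; exact hv.min_le_map_add _ _

end IsVal

def gaussVal (v : K → WithTop Λ) (γ : WithTop Λ) (g : K[X]) : WithTop Λ :=
  (range (g.natDegree + 1)).inf fun s => v (g.coeff s) + s • γ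

section GaussVal

variable {v : K → WithTop Λ}

lemma gaussVal_le (hv : IsVal v) (γ : WithTop Λ) (g : K[X]) (m : ℕ) :
    gaussVal v γ g ≤ v (g.coeff m) + m • γ := by
  by_cases hm : m ≤ g.natDegree
  · exact inf_le (mem_range.2 (Nat.lt_succ_of_le hm))
  · rw [coeff_eq_zero_of_natDegree_lt (not_le.1 hm), hv.map_zero, top_add]
    exact le_top

lemma gaussVal_le_gaussVal_taylor (hv : IsVal v) {γ δ : WithTop Λ} (hγδ : γ ≤ δ) {c : K}
    (hc : γ ≤ v c) (g : K[X]) : gaussVal v γ g ≤ gaussVal v δ (taylor c g) := by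
  refine Finset.le_inf fun s _ => ?_
  rw [taylor_coeff, eval_eq_sum_range]
  refine hv.le_map_sum fun n _ => ?_
  rw [hasseDeriv_coeff, hv.map_mul, hv.map_mul, hv.map_pow]
  calc gaussVal v γ g ≤ v (g.coeff (n + s)) + (n + s) • γ := gaussVal_le hv γ g _
    _ = v (g.coeff (n + s)) + n • γ + s • γ := by rw [add_nsmul, add_assoc]
    _ ≤ v ((n + s).choose s) + v (g.coeff (n + s)) + n • v c + s • δ := by
        gcongr
        exact le_add_of_nonneg_left (hv.natCast_nonneg _)

end GaussVal

namespace DepthZeroVal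

variable {v : K → WithTop Λ} {a : K} {γ : WithTop Λ} {ω : K[X] → WithTop Λ}

lemma eq_gaussVal_taylor (hω : DepthZeroVal v a γ ω) (f : K[X]) :
    ω f = gaussVal v γ (taylor a f) := by
  refine hω f _ _ ?_
  conv_lhs => rw [← sum_taylor_eq f a]
  exact sum_over_range _ (by simp)

lemma apply_X_sub_C (hv : IsVal v) (hω : DepthZeroVal v a γ ω) (b : K) :
    ω (X - C b) = min γ (v (a - b)) := by
  rw [hω _ 2 (fun s => if s = 0 then a - b else 1) (by simp [sum_range_succ])]
  simp [Finset.range_add_one, hv.map_one]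

end DepthZeroVal

/-- `ω_{a,γ} ≤ ω_{b,δ}` pointwise iff `γ ≤ δ` and `v(a−b) ≥ γ`. -/
theorem depthZero_le_iff (v : K → WithTop Λ) (hv : IsVal v)
    (a b : K) (γ δ : WithTop Λ)
    (ωa ωb : Polynomial K → WithTop Λ)
    (hωa : DepthZeroVal v a γ ωa) (hωb : DepthZeroVal v b δ ωb) :
    (∀ f : Polynomial K, ωa f ≤ ωb f) ↔ (γ ≤ δ ∧ γ ≤ v (a - b)) := by
  have hba : v (b - a) = v (a - b) := by rw [← neg_sub, hv.map_neg]
  constructor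
  · intro h
    have hle := h (X - C a)
    rw [hωa.apply_X_sub_C hv, hωb.apply_X_sub_C hv, sub_self, hv.map_zero, min_eq_left le_top,
      hba] at hle
    exact ⟨hle.trans (min_le_left _ _), hle.trans (min_le_right _ _)⟩
  · rintro ⟨hγδ, hab⟩ f
    have hb : taylor b f = taylor (b - a) (taylor a f) := by rw [taylor_taylor, sub_add_cancel]
    rw [hωa.eq_gaussVal_taylor, hωb.eq_gaussVal_taylor, hb]
    exact gaussVal_le_gaussVal_taylor hv hγδ (hba ▸ hab) _
end
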